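/- arXiv:2504.18489 — 2 statements merged into one kernel-verified Lean document; each statement's English description precedes it below -/
import Mathlib

section
/- Let k ≥ 2 and n₁ ≥ n₂ ≥ ... ≥ n_k ≥ 1 be integers, and let Δ be a real number such that there exist m ∈ ℕ and a matrix A ∈ [0,1]^{n′×m}, with n′ = ⌊n₁/2⌋, whose (1/k)-weighted discrepancy satisfies wdisc_{1/k}(A) ≥ Δ. Then for every real c < Δ/2, there exists a group fair division instance with group sizes n₁,...,n_k (with all item utilities in [0,1]) that admits no EFc allocation. Consequently, c^EF(n₁,...,n_k) ≥ wdisc^max_{1/k}(⌊n₁/2⌋)/2. -/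
open Finset

/-- The `∞`-norm of a vector: the maximum absolute value of a coordinate. -/
noncomputable def infNorm {n : ℕ} (v : Fin n → ℝ) : ℝ := ⨆ i, |v i|

/-- The `p`-weighted discrepancy of a matrix `A ∈ [0,1]^{n×m}`:
`wdisc_p(A) = min over x ∈ {0,1}^m of ‖A(p·𝟏 − x)‖_∞`. -/
noncomputable def wdisc (p : ℝ) {n m : ℕ} (A : Matrix (Fin n) (Fin m) ℝ) : ℝ :=
  ⨅ x : Fin m → Fin 2, infNorm (A.mulVec (fun j => p - ((x j : ℕ) : ℝ)))

/-- The bundle of group `i` under the allocation `χ : [m] → [k]`. -/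
def bundle {k m : ℕ} (χ : Fin m → Fin k) (i : Fin k) : Finset (Fin m) :=
  Finset.univ.filter (fun g => χ g = i)

/-- An allocation `χ` is envy-free up to `c` goods (EF`c`): for all `i, i' ∈ [k]` and
`j ∈ [n_i]` there exists `B ⊆ G` with `|B| ≤ c` such that
`u^{(i,j)}(A_i) ≥ u^{(i,j)}(A_{i'} \ B)`. -/
def IsEF {k m : ℕ} (ns : Fin k → ℕ) (u : ∀ i : Fin k, Fin (ns i) → Fin m → ℝ)
    (χ : Fin m → Fin k) (c : ℝ) : Prop :=
  ∀ (i i' : Fin k) (j : Fin (ns i)), ∃ B : Finset (Fin m),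
    (B.card : ℝ) ≤ c ∧
    ∑ g ∈ bundle χ i, u i j g ≥ ∑ g ∈ bundle χ i' \ B, u i j g

/-!
Let `n = ⌊n₁/2⌋`. Give the first group one agent per row `a` of `A` and one per complement
`1 - a`, and let every other agent value every good at `1`. Under an EF`c` allocation with
`A₁` the first bundle, summing the envy bounds of an agent over all `k` bundles gives
`a(G) ≤ k (a(A₁) + c)`, the same for `1 - a` gives `m - a(G) ≤ k (|A₁| - a(A₁) + c)`, and the
unit-valuation agents give `k (|A₁| - c) ≤ m`. Together `|a(G)/k - a(A₁)| ≤ 2c` for every row,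
so the indicator `x` of `A₁` has `‖A(𝟏/k − x)‖_∞ ≤ 2c < Δ ≤ wdisc_{1/k}(A)`, which is absurd.
-/

lemma infNorm_nonneg {n : ℕ} (v : Fin n → ℝ) : 0 ≤ infNorm v :=
  Real.iSup_nonneg fun i => abs_nonneg (v i)

lemma exists_le_abs_of_le_infNorm {n : ℕ} {v : Fin n → ℝ} {Δ : ℝ} (hΔ : 0 < Δ)
    (h : Δ ≤ infNorm v) : ∃ i, Δ ≤ |v i| := by
  rcases isEmpty_or_nonempty (Fin n) with hn | hn
  · rw [infNorm, Real.iSup_of_isEmpty] at h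
    linarith
  · obtain ⟨i, hi⟩ := exists_eq_ciSup_of_finite (f := fun i => |v i|)
    exact ⟨i, hi ▸ h⟩

lemma wdisc_le_infNorm (p : ℝ) {n m : ℕ} (A : Matrix (Fin n) (Fin m) ℝ) (x : Fin m → Fin 2) :
    wdisc p A ≤ infNorm (A.mulVec fun j => p - ((x j : ℕ) : ℝ)) :=
  ciInf_le ⟨0, by rintro _ ⟨y, rfl⟩; exact infNorm_nonneg _⟩ x

lemma mulVec_sub_indicator_bundle {k n m : ℕ} (A : Matrix (Fin n) (Fin m) ℝ) (p : ℝ)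
    (χ : Fin m → Fin k) (i₀ : Fin k) (r : Fin n) :
    (A.mulVec fun g => p - (((if χ g = i₀ then 1 else 0 : Fin 2) : ℕ) : ℝ)) r
      = p * ∑ g, A r g - ∑ g ∈ bundle χ i₀, A r g := by
  have hterm : ∀ g, A r g * (p - (((if χ g = i₀ then 1 else 0 : Fin 2) : ℕ) : ℝ))
      = p * A r g - if χ g = i₀ then A r g else 0 := by
    intro g
    split_ifs <;> simp <;> ring
  simp only [Matrix.mulVec, dotProduct, hterm, sum_sub_distrib, ← mul_sum, bundle, sum_filter]

lemma sum_sub_card_le_sum_sdiff {α : Type*} [DecidableEq α] {f : α → ℝ} {s : Finset α}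
    (hf : ∀ a ∈ s, f a ≤ 1) (t : Finset α) :
    ∑ a ∈ s, f a - t.card ≤ ∑ a ∈ s \ t, f a := by
  have hinter : ∑ a ∈ s ∩ t, f a ≤ (s ∩ t).card := by
    simpa using sum_le_card_nsmul (s ∩ t) f 1 fun a ha => hf a (mem_inter.1 ha).1
  have hcard : ((s ∩ t).card : ℝ) ≤ t.card := by
    exact_mod_cast card_le_card inter_subset_right
  linarith [sum_inter_add_sum_sdiff s t f]

lemma sum_sum_bundle {k m : ℕ} (χ : Fin m → Fin k) (f : Fin m → ℝ) :
    ∑ i, ∑ g ∈ bundle χ i, f g = ∑ g, f g :=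
  sum_fiberwise univ χ f

namespace IsEF

variable {k m : ℕ} {ns : Fin k → ℕ} {u : ∀ i : Fin k, Fin (ns i) → Fin m → ℝ}
  {χ : Fin m → Fin k} {c : ℝ}

lemma nonneg (h : IsEF ns u χ c) (i : Fin k) (j : Fin (ns i)) : 0 ≤ c := by
  obtain ⟨B, hB, -⟩ := h i i j
  exact (Nat.cast_nonneg _).trans hB

lemma sum_bundle_sub_le (h : IsEF ns u χ c) {i : Fin k} {j : Fin (ns i)}
    (hu : ∀ g, u i j g ≤ 1) (i' : Fin k) :
    ∑ g ∈ bundle χ i', u i j g - c ≤ ∑ g ∈ bundle χ i, u i j g := by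
  obtain ⟨B, hB, hle⟩ := h i i' j
  linarith [sum_sub_card_le_sum_sdiff (fun g _ => hu g) (s := bundle χ i') B]

lemma sum_le_mul (h : IsEF ns u χ c) {i : Fin k} {j : Fin (ns i)} (hu : ∀ g, u i j g ≤ 1) :
    ∑ g, u i j g ≤ k * (∑ g ∈ bundle χ i, u i j g + c) := by
  have hsum := sum_le_sum fun i' (_ : i' ∈ univ) => h.sum_bundle_sub_le hu i'
  simp only [sum_sub_distrib, sum_sum_bundle, sum_const, card_univ, Fintype.card_fin,
    nsmul_eq_mul] at hsum
  linarith

lemma mul_card_bundle_le (h : IsEF ns u χ c) (hc : 0 ≤ c) {i₀ : Fin k}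
    (hones : ∀ i ≠ i₀, ∃ j, ∀ g, u i j g = 1) :
    k * ((bundle χ i₀).card - c) ≤ m := by
  have hle : ∀ i, ((bundle χ i₀).card : ℝ) - c ≤ (bundle χ i).card := by
    intro i
    by_cases hi : i = i₀
    · subst hi
      linarith
    · obtain ⟨j, hj⟩ := hones i hi
      simpa [hj] using h.sum_bundle_sub_le (fun g => (hj g).le) i₀
  have hsum := sum_le_sum fun i (_ : i ∈ univ) => hle i
  have hm := sum_sum_bundle χ fun _ => (1 : ℝ)
  simp only [sum_const, card_univ, Fintype.card_fin, nsmul_eq_mul, mul_one] at hsum hm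
  linarith

lemma abs_sum_sub_le (h : IsEF ns u χ c) (hu : ∀ i j g, u i j g ≤ 1) {i₀ : Fin k}
    (hones : ∀ i ≠ i₀, ∃ j, ∀ g, u i j g = 1) {a : Fin m → ℝ} {j₁ j₂ : Fin (ns i₀)}
    (h₁ : ∀ g, u i₀ j₁ g = a g) (h₂ : ∀ g, u i₀ j₂ g = 1 - a g) :
    |(1 / k) * ∑ g, a g - ∑ g ∈ bundle χ i₀, a g| ≤ 2 * c := by
  have hc := h.nonneg i₀ j₁
  have hk : (0 : ℝ) < k := by exact_mod_cast i₀.pos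
  have ha := h.sum_le_mul (hu i₀ j₁)
  have hb := h.sum_le_mul (hu i₀ j₂)
  have hcard := h.mul_card_bundle_le hc hones
  simp only [h₁, h₂, sum_sub_distrib, sum_const, card_univ, Fintype.card_fin,
    nsmul_eq_mul, mul_one] at ha hb
  rw [show (1 / k) * ∑ g, a g - ∑ g ∈ bundle χ i₀, a g
      = (∑ g, a g - k * ∑ g ∈ bundle χ i₀, a g) / k by field_simp,
    abs_div, abs_of_pos hk, div_le_iff₀ hk, abs_le]
  constructor <;> nlinarith

end IsEF

def discInstance {k m n : ℕ} (ns : Fin k → ℕ) (i₀ : Fin k) (A : Matrix (Fin n) (Fin m) ℝ) :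
    ∀ i : Fin k, Fin (ns i) → Fin m → ℝ := fun i j g =>
  if i = i₀ then
    if h : (j : ℕ) < n then A ⟨j, h⟩ g
    else if h' : (j : ℕ) - n < n then 1 - A ⟨j - n, h'⟩ g else 1
  else 1

section discInstance

variable {k m n : ℕ} {ns : Fin k → ℕ} {i₀ : Fin k} {A : Matrix (Fin n) (Fin m) ℝ}

lemma discInstance_mem_Icc (hA : ∀ r g, A r g ∈ Set.Icc (0 : ℝ) 1) (i : Fin k)
    (j : Fin (ns i)) (g : Fin m) : discInstance ns i₀ A i j g ∈ Set.Icc (0 : ℝ) 1 := by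
  unfold discInstance
  split_ifs
  · exact hA _ g
  · obtain ⟨h₀, h₁⟩ := hA ⟨j - n, ‹_›⟩ g
    constructor <;> linarith
  all_goals exact ⟨zero_le_one, le_rfl⟩

lemma discInstance_castAdd (hn : n + n ≤ ns i₀) (r : Fin n) (g : Fin m) :
    discInstance ns i₀ A i₀ (Fin.castLE hn (Fin.castAdd n r)) g = A r g := by
  simp [discInstance]

lemma discInstance_natAdd (hn : n + n ≤ ns i₀) (r : Fin n) (g : Fin m) :
    discInstance ns i₀ A i₀ (Fin.castLE hn (Fin.natAdd n r)) g = 1 - A r g := by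
  simp [discInstance]

lemma discInstance_of_ne {i : Fin k} (hi : i ≠ i₀) (j : Fin (ns i)) (g : Fin m) :
    discInstance ns i₀ A i j g = 1 := by
  simp [discInstance, hi]

end discInstance

lemma not_isEF_discInstance {k m n : ℕ} {ns : Fin k → ℕ} (hpos : ∀ i, 1 ≤ ns i)
    {i₀ : Fin k} (hn : n + n ≤ ns i₀) {A : Matrix (Fin n) (Fin m) ℝ}
    (hA : ∀ r g, A r g ∈ Set.Icc (0 : ℝ) 1) {Δ c : ℝ} (hwd : Δ ≤ wdisc (1 / (k : ℝ)) A)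
    (hc : c < Δ / 2) (χ : Fin m → Fin k) : ¬ IsEF ns (discInstance ns i₀ A) χ c := by
  intro hEF
  have hc₀ : 0 ≤ c := hEF.nonneg i₀ ⟨0, hpos i₀⟩
  obtain ⟨r, hr⟩ := exists_le_abs_of_le_infNorm (by linarith)
    (hwd.trans (wdisc_le_infNorm _ A fun g => if χ g = i₀ then 1 else 0))
  rw [mulVec_sub_indicator_bundle] at hr
  have hle := hEF.abs_sum_sub_le (fun i j g => (discInstance_mem_Icc hA i j g).2)
    (fun i hi => ⟨⟨0, hpos i⟩, discInstance_of_ne hi _⟩)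
    (discInstance_castAdd hn r) (discInstance_natAdd hn r)
  linarith

/-- Let `k ≥ 2` and `n₁ ≥ ⋯ ≥ n_k ≥ 1` be integers (given as an
antitone `ns : Fin k → ℕ`), and let `Δ` be such that some matrix
`A ∈ [0,1]^{⌊n₁/2⌋ × m}` has `wdisc_{1/k}(A) ≥ Δ`.  Then for every real `c < Δ/2`
there exists a group fair division instance with group sizes `n₁, …, n_k` and all item
utilities in `[0,1]` that admits no EF`c` allocation.  Consequently
`c^EF(n₁,…,n_k) ≥ wdisc^max_{1/k}(⌊n₁/2⌋)/2`. -/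
theorem ef_lower_bound_from_wdisc (k : ℕ) (hk : 2 ≤ k) (ns : Fin k → ℕ)
    (hpos : ∀ i, 1 ≤ ns i)
    (Δ : ℝ)
    (hΔ : ∃ (m : ℕ) (A : Matrix (Fin (ns ⟨0, by omega⟩ / 2)) (Fin m) ℝ),
      (∀ i j, A i j ∈ Set.Icc (0 : ℝ) 1) ∧ Δ ≤ wdisc (1 / (k : ℝ)) A) :
    ∀ c : ℝ, c < Δ / 2 →
      ∃ (m : ℕ) (u : ∀ i : Fin k, Fin (ns i) → Fin m → ℝ),
        (∀ i j g, u i j g ∈ Set.Icc (0 : ℝ) 1) ∧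
        ∀ χ : Fin m → Fin k, ¬ IsEF ns u χ c := by
  intro c hc
  obtain ⟨m, A, hA, hwd⟩ := hΔ
  exact ⟨m, discInstance ns _ A, discInstance_mem_Icc hA,
    not_isEF_discInstance hpos (i₀ := ⟨0, by omega⟩) (by omega) hA hwd hc⟩
end

section
/- For all positive integers k ≥ 2 and n₁ ≥ n₂ ≥ ... ≥ n_k ≥ 1, and for every i* ∈ [k], there exists a group fair division instance with group sizes n₁,...,n_k (with all item utilities in [0,1]) such that for every real c < (i*/k)·√(⌊n_{i*}/2⌋ − 1)/16, no allocation is PROPc. Consequently, c^PROP(n₁,...,n_k) ≥ max over i* ∈ [k] of (i*/k)·√(⌊n_{i*}/2⌋ − 1)/16 = Ω(max_{i*∈[k]} (i*/k)·√n_{i*}). -/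
open Finset

/-- An allocation `χ` is proportional up to `c` goods (PROP`c`): for all `i ∈ [k]` and
`j ∈ [n_i]` there exists `B ⊆ G \ A_i` with `|B| ≤ c` such that
`u^{(i,j)}(A_i) ≥ u^{(i,j)}(G)/k − u^{(i,j)}(B)`. -/
def IsProp {k m : ℕ} (ns : Fin k → ℕ) (u : ∀ i : Fin k, Fin (ns i) → Fin m → ℝ)
    (χ : Fin m → Fin k) (c : ℝ) : Prop :=
  ∀ (i : Fin k) (j : Fin (ns i)), ∃ B : Finset (Fin m),
    (∀ g ∈ B, g ∉ bundle χ i) ∧ (B.card : ℝ) ≤ c ∧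
    ∑ g ∈ bundle χ i, u i j g ≥ (∑ g, u i j g) / (k : ℝ) - ∑ g ∈ B, u i j g

/-!
Items are coloured by `v ∈ {0,1}^d`, each colour used `K ≈ k/2` times.  In each of the first `i*`
groups there is, for every `a ∈ {0,1}^d`, an agent valuing colour `v` at `(1 + (-1)^{a·v})/2` and
one valuing it at `(1 - (-1)^{a·v})/2`; every other group has an agent valuing all items at `1`.
PROP`c` for such a pair bounds the `a`-th Walsh coefficient of the colour histogram of the bundle
`A_i`, centred at `ρ = K/k`, by the slack `|A_i| - m/k + 2c`.  The centred histogram has entries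
`n - ρ` with `n ∈ ℕ` and `ρ ≤ 1/2`, all of absolute value at least `ρ`, so by Parseval some
coefficient is at least `ρ · 2^{d/2}`.  The slacks are nonnegative and sum to `2kc`, whence
`i* · ρ · 2^{d/2} ≤ 2kc`; with `2^d > ⌊n_{i*}/2⌋ / 2` and `ρ ≥ 1/3` this is the claimed bound.
-/

section Walsh

variable {α : Type*} {d : ℕ}

def walsh (a v : Fin d → Bool) : ℝ :=
  ∏ i, if a i && v i then -1 else 1

lemma abs_walsh (a v : Fin d → Bool) : |walsh a v| = 1 := by
  simp only [walsh, abs_prod]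
  exact Finset.prod_eq_one fun i _ => by split_ifs <;> simp

@[simp]
lemma walsh_bot_left (v : Fin d → Bool) : walsh ⊥ v = 1 := by
  simp [walsh]

lemma sum_walsh_mul_walsh (b b' : Fin d → Bool) :
    ∑ a, walsh a b * walsh a b' = if b = b' then 2 ^ d else 0 := by
  have hcoord (x y : Bool) :
      ∑ z : Bool, (if z && x then (-1 : ℝ) else 1) * (if z && y then -1 else 1) =
        if x = y then 2 else 0 := by
    cases x <;> cases y <;> norm_num
  simp only [walsh, ← prod_mul_distrib]
  rw [← Fintype.prod_sum (fun i z => (if z && b i then (-1 : ℝ) else 1) *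
    (if z && b' i then -1 else 1))]
  simp only [hcoord, Fintype.prod_ite_zero, funext_iff, prod_const, card_univ, Fintype.card_fin]

lemma sum_sq_walsh_transform (z : (Fin d → Bool) → ℝ) :
    ∑ a, (∑ v, z v * walsh a v) ^ 2 = 2 ^ d * ∑ v, z v ^ 2 := by
  calc ∑ a, (∑ v, z v * walsh a v) ^ 2
      = ∑ v, ∑ v', z v * z v' * ∑ a, walsh a v * walsh a v' := by
        rw [sum_congr rfl fun a _ => (sq _).trans (sum_mul_sum _ _ _ _)]
        simp only [mul_sum]
        rw [sum_comm]
        refine sum_congr rfl fun v _ => ?_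
        rw [sum_comm]
        exact sum_congr rfl fun v' _ => sum_congr rfl fun a _ => by ring
    _ = 2 ^ d * ∑ v, z v ^ 2 := by
        simp [sum_walsh_mul_walsh, mul_sum, sq, mul_comm]

lemma sum_walsh_comp (S : Finset α) (col : α → (Fin d → Bool)) (a : Fin d → Bool) :
    ∑ g ∈ S, walsh a (col g) = ∑ v, (#{g ∈ S | col g = v} : ℝ) * walsh a v := by
  rw [← sum_fiberwise' S col]
  simp only [sum_const, nsmul_eq_mul]

theorem mul_sqrt_le_of_abs_walsh_sum_le (S : Finset α) (col : α → (Fin d → Bool))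
    {ρ D : ℝ} (hρ : 0 ≤ ρ) (hρ2 : 2 * ρ ≤ 1)
    (h : ∀ a, |∑ g ∈ S, walsh a (col g) - ρ * ∑ v, walsh a v| ≤ D) :
    ρ * √(2 ^ d) ≤ D := by
  set z : (Fin d → Bool) → ℝ := fun v => #{g ∈ S | col g = v} - ρ
  have hz (a : Fin d → Bool) :
      ∑ v, z v * walsh a v = ∑ g ∈ S, walsh a (col g) - ρ * ∑ v, walsh a v := by
    simp only [z, sub_mul, sum_sub_distrib, sum_walsh_comp, mul_sum]
  -- every colour class has an integer size `n`, and `(n - ρ)² - ρ² = n (n - 2ρ) ≥ 0`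
  have hρz (v : Fin d → Bool) : ρ ^ 2 ≤ z v ^ 2 := by
    obtain h0 | h1 := Nat.eq_zero_or_pos #{g ∈ S | col g = v}
    · simp [z, h0]
    · have : (1 : ℝ) ≤ #{g ∈ S | col g = v} := by exact_mod_cast h1
      nlinarith
  have hD : 0 ≤ D := (abs_nonneg _).trans (h ⊥)
  have hQ : (0 : ℝ) < 2 ^ d := by positivity
  have hsq : 2 ^ d * (2 ^ d * ρ ^ 2) ≤ 2 ^ d * D ^ 2 :=
    calc 2 ^ d * (2 ^ d * ρ ^ 2) = 2 ^ d * ∑ _v : Fin d → Bool, ρ ^ 2 := by simp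
      _ ≤ 2 ^ d * ∑ v, z v ^ 2 := mul_le_mul_of_nonneg_left (sum_le_sum fun v _ => hρz v) hQ.le
      _ = ∑ a, (∑ v, z v * walsh a v) ^ 2 := (sum_sq_walsh_transform z).symm
      _ ≤ ∑ _a : Fin d → Bool, D ^ 2 := by
        refine sum_le_sum fun a _ => ?_
        rw [hz]
        exact sq_le_sq' (neg_le_of_abs_le (h a)) (le_of_abs_le (h a))
      _ = 2 ^ d * D ^ 2 := by simp
  rw [← pow_le_pow_iff_left₀ (by positivity) hD two_ne_zero, mul_pow, Real.sq_sqrt hQ.le]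
  nlinarith

noncomputable def walshUtility (p : (Fin d → Bool) × Bool) (v : Fin d → Bool) : ℝ :=
  (1 + if p.2 then walsh p.1 v else -walsh p.1 v) / 2

lemma walshUtility_mem_Icc (p : (Fin d → Bool) × Bool) (v : Fin d → Bool) :
    walshUtility p v ∈ Set.Icc (0 : ℝ) 1 := by
  have := abs_le.1 (abs_walsh p.1 v).le
  unfold walshUtility
  constructor <;> split_ifs <;> linarith

@[simp]
lemma walshUtility_bot_true (v : Fin d → Bool) : walshUtility (⊥, true) v = 1 := by
  norm_num [walshUtility]

end Walsh

section IsProp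

variable {d k m K : ℕ} {ns : Fin k → ℕ} {u : ∀ i : Fin k, Fin (ns i) → Fin m → ℝ}
  {χ : Fin m → Fin k} {c : ℝ}

lemma IsProp.nonneg (hP : IsProp ns u χ c) {i : Fin k} (j : Fin (ns i)) : 0 ≤ c := by
  obtain ⟨B, -, hB, -⟩ := hP i j
  exact (Nat.cast_nonneg _).trans hB

lemma IsProp.sum_bundle_ge (hP : IsProp ns u χ c) (i : Fin k) (j : Fin (ns i))
    (hu : ∀ g, u i j g ≤ 1) :
    (∑ g, u i j g) / k - c ≤ ∑ g ∈ bundle χ i, u i j g := by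
  obtain ⟨B, -, hB, hprop⟩ := hP i j
  have hBu : ∑ g ∈ B, u i j g ≤ #B := by simpa using sum_le_sum fun g (_ : g ∈ B) => hu g
  linarith

lemma sum_card_bundle (χ : Fin m → Fin k) : ∑ i, #(bundle χ i) = m := by
  simpa [bundle] using
    (card_eq_sum_card_fiberwise (f := χ) (s := univ) (t := univ) fun g _ => mem_univ _).symm

theorem IsProp.mul_sqrt_le_card_bundle (hP : IsProp ns u χ c) (col : Fin m → (Fin d → Bool))
    (hcol : ∀ f : (Fin d → Bool) → ℝ, ∑ g, f (col g) = K * ∑ v, f v) (hK : 2 * K ≤ k)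
    (i : Fin k) (hi : ∀ p, ∃ j, ∀ g, u i j g = walshUtility p (col g)) :
    K / k * √(2 ^ d) ≤ #(bundle χ i) - m / k + 2 * c := by
  refine mul_sqrt_le_of_abs_walsh_sum_le (bundle χ i) col (by positivity)
    (by rw [mul_div_assoc']; exact div_le_one_of_le₀ (by exact_mod_cast hK) k.cast_nonneg)
    fun a => ?_
  obtain ⟨jplus, hplus⟩ := hi (a, true)
  obtain ⟨jminus, hminus⟩ := hi (a, false)
  have eplus := hP.sum_bundle_ge i jplus fun g => (hplus g).trans_le (walshUtility_mem_Icc _ _).2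
  have eminus := hP.sum_bundle_ge i jminus fun g => (hminus g).trans_le (walshUtility_mem_Icc _ _).2
  simp only [hplus, hminus, walshUtility, if_true, Bool.false_eq_true, if_false, ← sum_div,
    sum_add_distrib, sum_neg_distrib, sum_const, card_univ, Fintype.card_fin, nsmul_eq_mul,
    mul_one, hcol (walsh a)] at eplus eminus
  have hsplit (ε : ℝ) : (m + ε * (K * ∑ v, walsh a v)) / 2 / k =
      (m / k + ε * (K / k * ∑ v, walsh a v)) / 2 := by ring
  rw [← one_mul (K * _ : ℝ), hsplit] at eplus
  rw [neg_eq_neg_one_mul, hsplit] at eminus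
  rw [abs_le]
  constructor <;> linarith

theorem IsProp.card_mul_sqrt_le (hP : IsProp ns u χ c) (col : Fin m → (Fin d → Bool))
    (hcol : ∀ f : (Fin d → Bool) → ℝ, ∑ g, f (col g) = K * ∑ v, f v) (hK : 2 * K ≤ k)
    (hone : ∀ i, ∃ j, ∀ g, u i j g = 1) (T : Finset (Fin k))
    (hT : ∀ i ∈ T, ∀ p, ∃ j, ∀ g, u i j g = walshUtility p (col g)) :
    #T * (K / k * √(2 ^ d)) ≤ 2 * k * c := by
  obtain rfl | hk := eq_or_ne k 0
  · simp [Finset.eq_empty_of_isEmpty T]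
  set y : Fin k → ℝ := fun i => #(bundle χ i) - m / k + 2 * c
  have hy (i : Fin k) : 0 ≤ y i := by
    obtain ⟨j, hj⟩ := hone i
    have := hP.sum_bundle_ge i j fun g => (hj g).le
    simp only [hj, sum_const, card_univ, Fintype.card_fin, nsmul_eq_mul, mul_one] at this
    linarith [hP.nonneg j]
  have hsum : ∑ i, y i = 2 * k * c := by
    simp only [y, sum_add_distrib, sum_sub_distrib, ← Nat.cast_sum, sum_card_bundle, sum_const,
      card_univ, Fintype.card_fin, nsmul_eq_mul]
    field_simp
    ring
  calc #T * (K / k * √(2 ^ d))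
      ≤ ∑ i ∈ T, y i := by
        simpa using card_nsmul_le_sum T y _ fun i hi =>
          hP.mul_sqrt_le_card_bundle col hcol hK i (hT i hi)
    _ ≤ ∑ i, y i := sum_le_univ_sum_of_nonneg hy
    _ = 2 * k * c := hsum

lemma exists_balanced_coloring (K d : ℕ) : ∃ col : Fin (K * 2 ^ d) → (Fin d → Bool),
    ∀ f : (Fin d → Bool) → ℝ, ∑ g, f (col g) = K * ∑ v, f v := by
  let e : Fin K × (Fin d → Bool) ≃ Fin (K * 2 ^ d) := Fintype.equivFinOfCardEq (by simp)
  refine ⟨fun g => (e.symm g).2, fun f => ?_⟩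
  rw [← e.sum_comp, Fintype.sum_prod_type]
  simp

theorem exists_instance_card_mul_sqrt_le (ns : Fin k → ℕ) (hpos : ∀ i, 1 ≤ ns i)
    (T : Finset (Fin k)) (hT : ∀ i ∈ T, 2 * 2 ^ d ≤ ns i) (hK : 2 * K ≤ k) :
    ∃ (m : ℕ) (u : ∀ i : Fin k, Fin (ns i) → Fin m → ℝ),
      (∀ i j g, u i j g ∈ Set.Icc (0 : ℝ) 1) ∧
      ∀ c χ, IsProp ns u χ c → #T * (K / k * √(2 ^ d)) ≤ 2 * k * c := by
  obtain ⟨col, hcol⟩ := exists_balanced_coloring K d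
  have (i : Fin k) :
      ∃ σ : Fin (ns i) → (Fin d → Bool) × Bool, i ∈ T → σ.Surjective := by
    by_cases hi : i ∈ T
    · obtain ⟨σ, hσ⟩ := Function.exists_surjective_iff.2
        ⟨⟨fun _ => (⊥, true)⟩, Function.Embedding.nonempty_of_card_le
          (α := (Fin d → Bool) × Bool) (β := Fin (ns i)) (by simpa [mul_comm] using hT i hi)⟩
      exact ⟨σ, fun _ => hσ⟩
    · exact ⟨fun _ => (⊥, true), fun h => absurd h hi⟩
  choose σ hσ using this
  refine ⟨_, fun i j g => if i ∈ T then walshUtility (σ i j) (col g) else 1, fun i j g => ?_,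
    fun c χ hP => hP.card_mul_sqrt_le col hcol hK (fun i => ?_) T fun i hi p => ?_⟩
  · dsimp only
    split_ifs
    · exact walshUtility_mem_Icc _ _
    · simp
  · by_cases hi : i ∈ T
    · obtain ⟨j, hj⟩ := hσ i hi (⊥, true)
      exact ⟨j, fun g => by simp [hi, hj]⟩
    · exact ⟨⟨0, hpos i⟩, fun g => by simp [hi]⟩
  · obtain ⟨j, hj⟩ := hσ i hi p
    exact ⟨j, fun g => by simp [hi, hj]⟩

theorem exists_instance_card_mul_sqrt_le_six_mul (hk : 2 ≤ k) (ns : Fin k → ℕ)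
    (hpos : ∀ i, 1 ≤ ns i) (T : Finset (Fin k)) (hT : ∀ i ∈ T, 2 * 2 ^ d ≤ ns i) :
    ∃ (m : ℕ) (u : ∀ i : Fin k, Fin (ns i) → Fin m → ℝ),
      (∀ i j g, u i j g ∈ Set.Icc (0 : ℝ) 1) ∧
      ∀ c χ, IsProp ns u χ c → #T * √(2 ^ d) ≤ 6 * k * c := by
  obtain ⟨m, u, hu, hbound⟩ :=
    exists_instance_card_mul_sqrt_le (K := k / 2) ns hpos T hT (by omega)
  refine ⟨m, u, hu, fun c χ hP => ?_⟩
  have hρ : (k : ℝ) ≤ 3 * (k / 2 : ℕ) := by exact_mod_cast (by omega : k ≤ 3 * (k / 2))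
  have hk0 : (0 : ℝ) < k := by positivity
  calc #T * √(2 ^ d) = 3 * (#T * ((k / 3 : ℝ) / k * √(2 ^ d))) := by field_simp
    _ ≤ 3 * (#T * ((k / 2 : ℕ) / k * √(2 ^ d))) := by gcongr; linarith
    _ ≤ 3 * (2 * k * c) := by rel [hbound c χ hP]
    _ = 6 * k * c := by ring

end IsProp

lemma sqrt_sub_one_le_two_mul_sqrt_pow_log (N : ℕ) :
    √((N : ℝ) - 1) ≤ 2 * √(2 ^ Nat.log 2 N) := by
  have hN : (N : ℝ) < 2 * 2 ^ Nat.log 2 N := by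
    exact_mod_cast (pow_succ' 2 _) ▸ Nat.lt_pow_succ_log_self one_lt_two N
  calc √((N : ℝ) - 1) ≤ √(2 ^ 2 * 2 ^ Nat.log 2 N) := Real.sqrt_le_sqrt (by linarith)
    _ = 2 * √(2 ^ Nat.log 2 N) := by
      rw [Real.sqrt_mul (by positivity), Real.sqrt_sq zero_le_two]

/-- For all positive integers `k ≥ 2` and `n₁ ≥ ⋯ ≥ n_k ≥ 1` (given as
an antitone `ns : Fin k → ℕ`), and for every `i* ∈ [k]` (`istar : Fin k`, representing
the `(istar + 1)`-st group), there exists a group fair division instance with group sizes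
`n₁, …, n_k` (all item utilities in `[0,1]`) such that for every real
`c < (i*/k)·√(⌊n_{i*}/2⌋ − 1)/16`, no allocation is PROP`c`.  Consequently
`c^PROP(n₁,…,n_k) ≥ max_{i*∈[k]} (i*/k)·√(⌊n_{i*}/2⌋ − 1)/16
  = Ω(max_{i*∈[k]} (i*/k)·√n_{i*})`. -/
theorem prop_lower_bound (k : ℕ) (hk : 2 ≤ k) (ns : Fin k → ℕ)
    (hmono : ∀ a b : Fin k, a ≤ b → ns b ≤ ns a) (hpos : ∀ i, 1 ≤ ns i)
    (istar : Fin k) :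
    ∃ (m : ℕ) (u : ∀ i : Fin k, Fin (ns i) → Fin m → ℝ),
      (∀ i j g, u i j g ∈ Set.Icc (0 : ℝ) 1) ∧
      ∀ c : ℝ,
        c < (((istar : ℕ) : ℝ) + 1) / (k : ℝ)
              * (Real.sqrt (((ns istar / 2 : ℕ) : ℝ) - 1) / 16) →
        ∀ χ : Fin m → Fin k, ¬ IsProp ns u χ c := by
  obtain hN | hN := Nat.eq_zero_or_pos (ns istar / 2)
  · refine ⟨0, fun _ _ _ => 0, by simp, fun c hc χ hP => ?_⟩
    simp only [hN, Nat.cast_zero, zero_sub, zero_div, mul_zero,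
      Real.sqrt_eq_zero_of_nonpos (neg_nonpos.2 zero_le_one)] at hc
    exact hc.not_ge (hP.nonneg ⟨0, hpos istar⟩)
  have hd : 2 * 2 ^ Nat.log 2 (ns istar / 2) ≤ ns istar := by
    have := Nat.pow_log_le_self 2 hN.ne'
    omega
  obtain ⟨m, u, hu, hbound⟩ := exists_instance_card_mul_sqrt_le_six_mul hk ns hpos (Iic istar)
    fun i hi => hd.trans (hmono i istar (mem_Iic.1 hi))
  refine ⟨m, u, hu, fun c hc χ hP => ?_⟩
  have key := hbound c χ hP
  rw [Fin.card_Iic, Nat.cast_add, Nat.cast_one] at key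
  have hk0 : (0 : ℝ) < k := by positivity
  have : 16 * (k * c) < 12 * (k * c) :=
    calc 16 * (k * c) = k * 16 * c := by ring
      _ < k * 16 * (((istar : ℕ) + 1) / k * (√((ns istar / 2 : ℕ) - 1) / 16)) := by gcongr
      _ = ((istar : ℕ) + 1) * √((ns istar / 2 : ℕ) - 1) := by field_simp
      _ ≤ ((istar : ℕ) + 1) * (2 * √(2 ^ Nat.log 2 (ns istar / 2))) := by
        gcongr; exact sqrt_sub_one_le_two_mul_sqrt_pow_log _
      _ ≤ 12 * (k * c) := by linarith
  linarith [mul_nonneg hk0.le (hP.nonneg ⟨0, hpos istar⟩)]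
end
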